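/- Let q be a prime power, R a field that is an 𝔽_q-algebra, and t ∈ R nonzero. For a, b, c ∈ 𝔽_q let u(a,b,c) ∈ SL_3(R) be the upper unitriangular matrix with (1,2)-entry a·t, (2,3)-entry b·t, and (1,3)-entry c·t², and let K₁ = {u(a,b,c) : a,b,c ∈ 𝔽_q}. Let h₂(x) = e_{12}(xt) and h₃(y) = e_{23}(yt). Then: (i) for all a,b,c,x,y ∈ 𝔽_q, u(a,b,c)·h₂(x) = u(a+x, b, c) and u(a,b,c)·h₃(y) = u(a, b+y, c+ay); and (ii) for any natural numbers d_x, d_y and any function f : K₁ → 𝔽_q, defining F : 𝔽_p³ → 𝔽_q by F(a,b,c) = f(u(a,b,c)) (which is well defined since (a,b,c) ↦ u(a,b,c) is injective), the following are equivalent: (a) for every g ∈ K₁ the function x ↦ f(g·h₂(x)) has degree at most d_x and the function y ↦ f(g·h₃(y)) has degree at most d_y; (b) for all b, c ∈ 𝔽_q the function x ↦ F(x,b,c) has degree at most d_x and for all a, c ∈ 𝔽_q the function y ↦ F(a,y,ay+c) has degree at most d_y. -/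

import Mathlib

open Matrix

/-- A function `g : F → F` has degree at most `d` if it agrees with (the evaluation of)
a univariate polynomial of degree at most `d`. -/
def DegLE {F : Type*} [CommRing F] (d : ℕ) (g : F → F) : Prop :=
  ∃ P : Polynomial F, P.natDegree ≤ d ∧ ∀ x, g x = P.eval x

/-- The upper unitriangular matrix `u(a,b,c)` with `(1,2)`-entry `a·t`, `(2,3)`-entry
`b·t` and `(1,3)`-entry `c·t²`; the set of these is the subgroup `K₁`. -/
def uTri {F R : Type*} [Field F] [Field R] [Algebra F R] (t : R) (a b c : F) :
    Matrix (Fin 3) (Fin 3) R :=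
  !![1, algebraMap F R a * t, algebraMap F R c * t ^ 2;
     0, 1, algebraMap F R b * t;
     0, 0, 1]

/-- `h₂(x) = e₁₂(xt) = I + xt·E₁₂`. -/
def hTwo {F R : Type*} [Field F] [Field R] [Algebra F R] (t : R) (x : F) :
    Matrix (Fin 3) (Fin 3) R :=
  1 + Matrix.single 0 1 (algebraMap F R x * t)

/-- `h₃(y) = e₂₃(yt) = I + yt·E₂₃`. -/
def hThree {F R : Type*} [Field F] [Field R] [Algebra F R] (t : R) (y : F) :
    Matrix (Fin 3) (Fin 3) R :=
  1 + Matrix.single 1 2 (algebraMap F R y * t)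

/-! Right multiplication by `h₂(x)` and `h₃(y)` moves `u(a,b,c)` along the line
`x ↦ (a + x, b, c)`, resp. `y ↦ (a, b + y, c + a y)`; the latter is a translate of the skew line
`y ↦ (a, y, a y + (c - a b))`. Having degree at most `d` is invariant under translating the
variable (Taylor shift), so the coset conditions are exactly the line conditions. -/

lemma DegLE.comp_add_right {F : Type*} [CommRing F] {d : ℕ} {g : F → F} (h : DegLE d g)
    (s : F) : DegLE d (fun x => g (x + s)) := by
  obtain ⟨P, hP, hg⟩ := h
  exact ⟨Polynomial.taylor s P, (Polynomial.natDegree_taylor P s).le.trans hP,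
    fun x => (hg _).trans (Polynomial.taylor_eval s P x).symm⟩

section Matrices

variable {F R : Type*} [Field F] [Field R] [Algebra F R] (t : R)

lemma uTri_mul_hTwo (a b c x : F) : uTri t a b c * hTwo t x = uTri t (a + x) b c := by
  ext i j
  fin_cases i <;> fin_cases j <;> simp [uTri, hTwo, mul_apply, Fin.sum_univ_three, single]
  all_goals ring

lemma uTri_mul_hThree (a b c y : F) :
    uTri t a b c * hThree t y = uTri t a (b + y) (c + a * y) := by
  ext i j
  fin_cases i <;> fin_cases j <;> simp [uTri, hThree, mul_apply, Fin.sum_univ_three, single]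
  all_goals ring

variable {t}

lemma uTri_injective (ht : t ≠ 0) :
    Function.Injective fun v : F × F × F => uTri t v.1 v.2.1 v.2.2 := by
  rintro ⟨a, b, c⟩ ⟨a', b', c'⟩ h
  have entry (i j : Fin 3) := congrFun (congrFun h i) j
  obtain rfl : a = a' := by simpa [uTri, ht] using entry 0 1
  obtain rfl : b = b' := by simpa [uTri, ht] using entry 1 2
  obtain rfl : c = c' := by simpa [uTri, ht] using entry 0 2
  rfl

end Matrices

/-- **The local code at a vertex of type 1 is `C_{d_x,d_y}`.**  The parametrization
`(a,b,c) ↦ u(a,b,c)` of `K₁` is injective; right multiplication by the generators acts by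
`u(a,b,c)·h₂(x) = u(a+x,b,c)` and `u(a,b,c)·h₃(y) = u(a,b+y,c+ay)`; and a function `f` on
`K₁` has degree ≤ `d_x` along all cosets of `H₂` and degree ≤ `d_y` along all cosets of
`H₃` if and only if `F(a,b,c) = f(u(a,b,c))` has degree ≤ `d_x` on all axis-parallel
`x`-lines and degree ≤ `d_y` on all skew lines `y ↦ (a, y, ay+c)`. -/
theorem localCode_iso_at_type_one_vertex {F R : Type*} [Field F] [Field R] [Algebra F R]
    (t : R) (ht : t ≠ 0) :
    (Function.Injective fun v : F × F × F => uTri t v.1 v.2.1 v.2.2) ∧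
    (∀ a b c x y : F,
      uTri t a b c * hTwo t x = uTri t (a + x) b c ∧
      uTri t a b c * hThree t y = uTri t a (b + y) (c + a * y)) ∧
    (∀ (dx dy : ℕ) (f : Matrix (Fin 3) (Fin 3) R → F),
      ((∀ a b c : F, DegLE dx (fun x => f (uTri t a b c * hTwo t x)) ∧
          DegLE dy (fun y => f (uTri t a b c * hThree t y))) ↔
        ((∀ b c : F, DegLE dx (fun x => f (uTri t x b c))) ∧
          (∀ a c : F, DegLE dy (fun y => f (uTri t a y (a * y + c))))))) := by
  refine ⟨uTri_injective ht, fun a b c x y => ⟨uTri_mul_hTwo t a b c x, uTri_mul_hThree t a b c y⟩,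
    fun dx dy f => ?_⟩
  simp only [uTri_mul_hTwo, uTri_mul_hThree, forall_and]
  refine and_congr ⟨fun h b c => by simpa using h 0 b c, fun h a b c => ?_⟩
    ⟨fun h a c => by simpa [add_comm c] using h a 0 c, fun h a b c => ?_⟩
  · simpa [add_comm a] using (h b c).comp_add_right a
  · have hskew : (fun y => f (uTri t a (b + y) (c + a * y))) =
        fun y => f (uTri t a (y + b) (a * (y + b) + (c - a * b))) := by
      funext y; congr 1; congr 1 <;> ring
    rw [hskew]
    exact (h a (c - a * b)).comp_add_right b
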